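/- Let K be a commutative ring, P a finite poset, V ⊆ P a cosieve with inclusion v : V ↪ P, and Z ⊆ P a subposet with inclusion i : Z ↪ P; let v' : V∩Z ↪ Z and i' : V∩Z ↪ V denote the induced inclusions (V∩Z is a cosieve in Z). Then the canonical base-change morphism (v')_! (i')^* → i^* v_!, obtained from the units and counits of the adjunctions (v_!, v^*) and (v'_!, v'^*), is an isomorphism of functors (K-Mod)^V → (K-Mod)^Z. -/

import Mathlib

open CategoryTheory CategoryTheory.Limits

universe u

variable (K : Type u) [CommRing K] (P : Type u) [PartialOrder P]

/-- The inclusion functor of a subposet (a subset of `P` with the induced order). -/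
def inclFunctor (V : Set P) : (↥V) ⥤ P :=
  (Subtype.mono_coe (· ∈ V)).functor

/-- The inclusion functor `V ∩ Z ↪ Z`. -/
def inclInterLeft (V Z : Set P) : (↥(V ∩ Z)) ⥤ (↥Z) :=
  Monotone.functor (f := fun w => (⟨w.1, w.2.2⟩ : Z)) fun _ _ h => h

/-- The inclusion functor `V ∩ Z ↪ V`. -/
def inclInterRight (V Z : Set P) : (↥(V ∩ Z)) ⥤ (↥V) :=
  Monotone.functor (f := fun w => (⟨w.1, w.2.1⟩ : V)) fun _ _ h => h

lemma incl_comm (V Z : Set P) :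
    inclInterRight P V Z ⋙ inclFunctor P V = inclInterLeft P V Z ⋙ inclFunctor P Z :=
  CategoryTheory.Functor.ext (fun _ => rfl) (fun _ _ _ => Subsingleton.elim _ _)

/-- The canonical base-change morphism `(v')_! (i')^* G → i^* v_! G`, obtained from the
units and counits of the adjunctions `(v_!, v^*)` and `((v')_!, (v')^*)` (it is the
adjunction transpose of the whiskering of the unit `G → v^* v_! G`). -/
noncomputable def baseChange (V Z : Set P) (G : (↥V) ⥤ ModuleCat.{u} K) :
    (inclInterLeft P V Z).lan.obj (inclInterRight P V Z ⋙ G) ⟶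
      inclFunctor P Z ⋙ ((inclFunctor P V).lan.obj G) :=
  (((inclInterLeft P V Z).lanAdjunction (ModuleCat.{u} K)).homEquiv
      (inclInterRight P V Z ⋙ G) (inclFunctor P Z ⋙ ((inclFunctor P V).lan.obj G))).symm
    (Functor.whiskerLeft (inclInterRight P V Z)
        (((inclFunctor P V).lanAdjunction (ModuleCat.{u} K)).unit.app G) ≫
      eqToHom (show inclInterRight P V Z ⋙ (inclFunctor P V ⋙ (inclFunctor P V).lan.obj G)
            = inclInterLeft P V Z ⋙ (inclFunctor P Z ⋙ (inclFunctor P V).lan.obj G) by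
          rw [← Functor.assoc, ← Functor.assoc, incl_comm]))

/-!
Both sides are left Kan extensions along the inclusion of the cosieve `V ∩ Z` into `Z`, so it
suffices to show that `i^* v_! G`, with the transposed base-change map, is a pointwise left Kan
extension. At `z ∈ V` the comma category over `z` has the terminal object `z` itself, and the unit
of `v_! ⊣ v^*` is invertible because `v` is fully faithful. At `z ∉ V` the comma categories over `z`
for both `v` and `v'` are empty, since `V` is upward closed, so both colimits are initial.
-/

noncomputable def CategoryTheory.Functor.LeftExtension.isPointwiseLeftKanExtensionAtOfIsIsoHomApp
    {C D H : Type*} [Category C] [Category D] [Category H] {L : C ⥤ D} {F : C ⥤ H}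
    [L.Full] [L.Faithful] (E : L.LeftExtension F) (X : C) [IsIso (E.hom.app X)] :
    E.IsPointwiseLeftKanExtensionAt (L.obj X) := by
  let t := CostructuredArrow.mkIdTerminal (S := L) (Y := X)
  have : IsIso ((E.coconeAt (L.obj X)).ι.app (CostructuredArrow.mk (𝟙 (L.obj X)))) := by
    rw [Functor.LeftExtension.coconeAt_ι_app]
    exact IsIso.comp_isIso' (inferInstanceAs (IsIso (E.hom.app X))) (Functor.map_isIso _ (𝟙 _))
  exact (colimitOfDiagramTerminal t _).ofIsoColimit
    (Cocone.ext (asIso ((E.coconeAt (L.obj X)).ι.app _))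
      (fun j => (E.coconeAt (L.obj X)).w (t.from j)))

lemma isEmpty_costructuredArrow_of_forall_not_le {A Q : Type*} [Preorder A] [Preorder Q]
    {L : A ⥤ Q} {q : Q} (h : ∀ a, ¬L.obj a ≤ q) : IsEmpty (CostructuredArrow L q) :=
  ⟨fun g => h g.left (leOfHom g.hom)⟩

instance (V : Set P) : (inclFunctor P V).Full where
  map_surjective f := ⟨homOfLE (leOfHom f), rfl⟩

instance (V Z : Set P) : (inclInterLeft P V Z).Full where
  map_surjective f := ⟨homOfLE (leOfHom f), rfl⟩

section

variable {P}

noncomputable def isInitialLanObjOfNotMem {H : Type*} [Category H] [HasColimitsOfSize.{u, u} H]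
    {V : Set P} (hV : IsUpperSet V) (G : V ⥤ H) {p : P} (hp : p ∉ V) :
    IsInitial (((inclFunctor P V).lan.obj G).obj p) :=
  have := isEmpty_costructuredArrow_of_forall_not_le (L := inclFunctor P V) (q := p)
    fun a h => hp (hV h a.2)
  (isColimitEquivIsInitialOfIsEmpty _ _)
    (Functor.isPointwiseLeftKanExtensionLeftKanExtensionUnit _ G p)

variable {K}

noncomputable def baseChangeTranspose (V Z : Set P) (G : (↥V) ⥤ ModuleCat.{u} K) :
    inclInterRight P V Z ⋙ G ⟶
      inclInterLeft P V Z ⋙ (inclFunctor P Z ⋙ ((inclFunctor P V).lan.obj G)) :=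
  Functor.whiskerLeft (inclInterRight P V Z)
      (((inclFunctor P V).lanAdjunction (ModuleCat.{u} K)).unit.app G) ≫
    eqToHom (show inclInterRight P V Z ⋙ (inclFunctor P V ⋙ (inclFunctor P V).lan.obj G)
          = inclInterLeft P V Z ⋙ (inclFunctor P Z ⋙ (inclFunctor P V).lan.obj G) by
        rw [← Functor.assoc, ← Functor.assoc, incl_comm])

instance (V Z : Set P) (G : (↥V) ⥤ ModuleCat.{u} K) : IsIso (baseChangeTranspose V Z G) := by
  unfold baseChangeTranspose
  infer_instance

lemma lanUnit_app_comp_whiskerLeft_baseChange (V Z : Set P) (G : (↥V) ⥤ ModuleCat.{u} K) :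
    (inclInterLeft P V Z).lanUnit.app (inclInterRight P V Z ⋙ G) ≫
      Functor.whiskerLeft (inclInterLeft P V Z) (baseChange K P V Z G) =
    baseChangeTranspose V Z G := by
  rw [← Functor.lanAdjunction_unit]
  exact (((inclInterLeft P V Z).lanAdjunction _).homEquiv_unit _ _
    (baseChange K P V Z G)).symm.trans (Equiv.apply_symm_apply _ _)

lemma isLeftKanExtension_baseChangeTranspose {V : Set P} (hV : IsUpperSet V) (Z : Set P)
    (G : (↥V) ⥤ ModuleCat.{u} K) :
    (inclFunctor P Z ⋙ (inclFunctor P V).lan.obj G).IsLeftKanExtension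
      (baseChangeTranspose V Z G) := by
  refine Functor.LeftExtension.IsPointwiseLeftKanExtension.isLeftKanExtension
    (E := Functor.LeftExtension.mk _ (baseChangeTranspose V Z G)) fun z => ?_
  by_cases hz : z.1 ∈ V
  · have : IsIso ((Functor.LeftExtension.mk _ (baseChangeTranspose V Z G)).hom.app
        ⟨z.1, hz, z.2⟩) := inferInstanceAs (IsIso ((baseChangeTranspose V Z G).app _))
    exact Functor.LeftExtension.isPointwiseLeftKanExtensionAtOfIsIsoHomApp _
      (⟨z.1, hz, z.2⟩ : ↥(V ∩ Z))
  · have := isEmpty_costructuredArrow_of_forall_not_le (L := inclInterLeft P V Z) (q := z)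
      fun w h => hz (hV h w.2.1)
    exact (isColimitEquivIsInitialOfIsEmpty _ _).symm (isInitialLanObjOfNotMem hV G hz)

end

theorem statement_15 (V : Set P)
    (hV : ∀ ⦃a b : P⦄, a ≤ b → a ∈ V → b ∈ V) (Z : Set P) :
    ∀ G : (↥V) ⥤ ModuleCat.{u} K, IsIso (baseChange K P V Z G) := fun G =>
  (Functor.isLeftKanExtension_iff_isIso _ _ _ (lanUnit_app_comp_whiskerLeft_baseChange V Z G)).mp
    (isLeftKanExtension_baseChangeTranspose hV Z G)
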